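/- Let u, M be measurable with M(v) = e^{−b|v−u₀|²} a Gaussian weight on ℝ³ (b > 0, u₀ ∈ ℝ³), and let δ > 0 be small enough that ∫ e^{δ|v|²} M(v) dv < ∞. Then for every u ∈ H¹(M) := {u : ∫ (u² + |∇u|²) M dv < ∞}, ∫_{ℝ³} u² ⟨v⟩² M dv ≤ C ( ∫_{ℝ³} |∇u|² M dv + ∫_{ℝ³} u² M dv ), where C depends only on b, δ, u₀. -/

import Mathlib

open MeasureTheory Real ENNReal Set

noncomputable section

abbrev V3 := EuclideanSpace ℝ (Fin 3)

lemma transfer3 (i : Fin 3) (H : V3 → ℝ≥0∞) (hH : Measurable H) :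
    ∫⁻ v : V3, H v =
      ∫⁻ y : Fin 2 → ℝ, ∫⁻ t : ℝ,
        H (((MeasurableEquiv.toLp 2 (Fin 3 → ℝ)).symm).symm (i.insertNth t y)) := by
  set E := (MeasurableEquiv.toLp 2 (Fin 3 → ℝ)).symm with hEdef
  have hE := (EuclideanSpace.volume_preserving_symm_measurableEquiv_toLp (Fin 3)).symm
  have h1 : ∫⁻ v : V3, H v = ∫⁻ x : Fin 3 → ℝ, H (E.symm x) :=
    (hE.lintegral_comp hH).symm
  set Φ := MeasurableEquiv.piFinSuccAbove (fun _ : Fin 3 => ℝ) i with hΦdef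
  have hΦ := (MeasureTheory.volume_preserving_piFinSuccAbove (fun _ : Fin 3 => ℝ) i).symm
  have h2 : ∫⁻ x : Fin 3 → ℝ, H (E.symm x) = ∫⁻ p : ℝ × (Fin 2 → ℝ), H (E.symm (Φ.symm p)) :=
    (hΦ.lintegral_comp (hH.comp E.symm.measurable)).symm
  rw [h1, h2]
  rw [show (volume : Measure (ℝ × (Fin 2 → ℝ))) = (volume : Measure ℝ).prod volume from rfl]
  rw [MeasureTheory.lintegral_prod_symm (fun p : ℝ × (Fin 2 → ℝ) => H (E.symm (Φ.symm p)))
    (Measurable.aemeasurable (by exact hH.comp (E.symm.measurable.comp Φ.symm.measurable)))]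
  rfl


lemma oneD (b c : ℝ) (hb : 0 < b) (f f' : ℝ → ℝ)
    (hf : ∀ t, HasDerivAt f (f' t) t) (hm : Measurable f')
    (h2 : Integrable (fun t => f t ^ 2 * Real.exp (-b * (t - c) ^ 2)))
    (h3 : Integrable (fun t => f' t ^ 2 * Real.exp (-b * (t - c) ^ 2))) :
    ∫⁻ t : ℝ, ENNReal.ofReal (f t ^ 2 * (t - c) ^ 2 * Real.exp (-b * (t - c) ^ 2)) ≤
      ENNReal.ofReal ((1 / b) * (∫ t, f t ^ 2 * Real.exp (-b * (t - c) ^ 2)) +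
        (1 / b ^ 2) * (∫ t, f' t ^ 2 * Real.exp (-b * (t - c) ^ 2))) := by
  set w : ℝ → ℝ := fun t => Real.exp (-b * (t - c) ^ 2) with hwdef
  have hwpos : ∀ t, 0 < w t := fun t => Real.exp_pos _
  have hfc : Continuous f := by
    apply continuous_iff_continuousAt.mpr
    exact fun t => (hf t).continuousAt
  have hwderiv : ∀ t, HasDerivAt w (-(2 * b) * (t - c) * w t) t := by
    intro t
    have h1 : HasDerivAt (fun t : ℝ => -b * (t - c) ^ 2) (-b * (2 * (t - c))) t := by
      have := (((hasDerivAt_id t).sub_const c).pow 2).const_mul (-b)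
      simpa using this
    have := h1.exp
    convert this using 1
    ring
  have hwc : Continuous w :=
    Real.continuous_exp.comp (continuous_const.mul ((continuous_id.sub continuous_const).pow 2))
  set g : ℝ → ℝ := fun t => f t ^ 2 * (t - c) ^ 2 * w t with hgdef
  have hgc : Continuous g := by
    apply Continuous.mul ?_ hwc
    exact ((hfc.pow 2).mul ((continuous_id.sub continuous_const).pow 2))
  have hgnn : ∀ t, 0 ≤ g t := fun t => by positivity
  set F : ℝ → ℝ := fun t => f t ^ 2 * (t - c) * w t with hFdef
  set φ : ℝ → ℝ := fun t =>
    (2 * f t * f' t * (t - c) + f t ^ 2) * w t + (f t ^ 2 * (t - c)) * (-(2 * b) * (t - c) * w t)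
    with hφdef
  have hF : ∀ t, HasDerivAt F (φ t) t := by
    intro t
    have h1 : HasDerivAt (fun t => f t ^ 2 * (t - c))
        (2 * f t * f' t * (t - c) + f t ^ 2) t := by
      have := ((hf t).pow 2).mul ((hasDerivAt_id t).sub_const c)
      refine this.congr_deriv ?_
      simp only [id_eq, Pi.pow_apply, Nat.cast_ofNat, mul_one]
      ring
    have := h1.mul (hwderiv t)
    exact this
  -- the main interval bound
  have key : ∀ n : ℕ,
      ∫⁻ t in Icc (c - n) (c + n), ENNReal.ofReal (g t) ≤
        ENNReal.ofReal ((1 / b) * (∫ t, f t ^ 2 * w t) + (1 / b ^ 2) * (∫ t, f' t ^ 2 * w t)) := by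
    intro n
    set A := c - (n : ℝ) with hA
    set B := c + (n : ℝ) with hB
    have hAc : A ≤ c := by simp [hA]
    have hcB : c ≤ B := by simp [hB]
    have hAB : A ≤ B := hAc.trans hcB
    -- w is bounded below on Icc A B
    obtain ⟨ε, hεpos, hεle⟩ : ∃ ε : ℝ, 0 < ε ∧ ∀ t ∈ Icc A B, ε ≤ w t := by
      refine ⟨Real.exp (-b * (n : ℝ) ^ 2), Real.exp_pos _, fun t ht => ?_⟩
      apply Real.exp_le_exp.mpr
      have h1 : (t - c) ^ 2 ≤ (n : ℝ) ^ 2 := by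
        apply sq_le_sq'
        · simp only [hA, hB, mem_Icc] at ht; linarith [ht.1]
        · simp only [hA, hB, mem_Icc] at ht; linarith [ht.2]
      nlinarith
    -- f' is integrable on Icc A B
    have hf'int : IntegrableOn f' (Icc A B) := by
      have hdom : IntegrableOn (fun t => 1 + ε⁻¹ * (f' t ^ 2 * w t)) (Icc A B) := by
        exact (integrable_const 1).add ((h3.integrableOn).const_mul ε⁻¹)
      apply Integrable.mono' hdom (hm.aestronglyMeasurable.restrict)
      · filter_upwards [ae_restrict_mem measurableSet_Icc] with t ht
        have hwt := hεle t ht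
        have h1 : f' t ^ 2 ≤ ε⁻¹ * (f' t ^ 2 * w t) := by
          have h0 : ε * f' t ^ 2 ≤ f' t ^ 2 * w t := by nlinarith [sq_nonneg (f' t)]
          calc f' t ^ 2 = ε⁻¹ * (ε * f' t ^ 2) := by field_simp
            _ ≤ ε⁻¹ * (f' t ^ 2 * w t) := mul_le_mul_of_nonneg_left h0 (by positivity)
        have h2 : |f' t| ≤ 1 + f' t ^ 2 := by nlinarith [sq_nonneg (|f' t| - 1), abs_nonneg (f' t), sq_abs (f' t)]
        calc ‖f' t‖ = |f' t| := rfl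
          _ ≤ 1 + f' t ^ 2 := h2
          _ ≤ 1 + ε⁻¹ * (f' t ^ 2 * w t) := by linarith
    -- φ is interval integrable on [A, B]
    have hφint : IntervalIntegrable φ volume A B := by
      rw [intervalIntegrable_iff]
      have hsub : Set.uIoc A B ⊆ Icc A B := by
        rw [Set.uIoc_of_le hAB]; exact Set.Ioc_subset_Icc_self
      apply IntegrableOn.mono_set _ hsub
      -- split φ as (2 f f' (t-c) w) + (f² w + f²(t-c)·(-(2b)(t-c)w))
      have hsplit : ∀ t, φ t = (2 * f t * (t - c) * w t) * f' t +
          (f t ^ 2 * w t + (f t ^ 2 * (t - c)) * (-(2 * b) * (t - c) * w t)) := by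
        intro t; simp only [hφdef]; ring
      rw [show φ = _ from funext hsplit]
      apply Integrable.add
      · -- bounded continuous times integrable f'
        obtain ⟨K, hK⟩ := (isCompact_Icc (a := A) (b := B)).exists_bound_of_continuousOn
          (Continuous.continuousOn (((continuous_const.mul hfc).mul (continuous_id.sub continuous_const)).mul hwc : Continuous (fun t => 2 * f t * (t - c) * w t)))
        apply Integrable.mono' (hf'int.norm.const_mul K)
        · exact ((((continuous_const.mul hfc).mul (continuous_id.sub continuous_const)).mul hwc).measurable.mul hm).aestronglyMeasurable.restrict
        · filter_upwards [ae_restrict_mem measurableSet_Icc] with t ht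
          rw [norm_mul]
          apply mul_le_mul_of_nonneg_right (hK t ht) (norm_nonneg _) |>.trans
          exact le_of_eq rfl
      · apply Continuous.integrableOn_Icc
        exact ((hfc.pow 2).mul hwc).add (((hfc.pow 2).mul (continuous_id.sub continuous_const)).mul (((continuous_const.mul (continuous_id.sub continuous_const))).mul hwc))
    -- FTC
    have hFTC : ∫ t in A..B, φ t = F B - F A :=
      intervalIntegral.integral_eq_sub_of_hasDerivAt (fun t _ => hF t) hφint
    have hFB : 0 ≤ F B := by
      simp only [hFdef]
      have : 0 ≤ B - c := by linarith
      positivity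
    have hFA : F A ≤ 0 := by
      simp only [hFdef]
      have h1 : A - c ≤ 0 := by linarith
      have h2 : 0 ≤ f A ^ 2 * w A := by positivity
      nlinarith [hwpos A, sq_nonneg (f A)]
    -- pointwise absorption: b * g t ≤ f²w + (1/b) f'²w - φ t
    have habs : ∀ t, b * g t ≤ f t ^ 2 * w t + (1 / b) * (f' t ^ 2 * w t) - φ t := by
      intro t
      have hw := (hwpos t).le
      have hkey : 2 * (f t * (t - c)) * f' t ≤ b * (f t * (t - c)) ^ 2 + (1 / b) * f' t ^ 2 := by
        nlinarith [sq_nonneg (b * (f t * (t - c)) - f' t), hb, mul_one_div_cancel hb.ne', sq_nonneg (f' t)]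
      have := mul_le_mul_of_nonneg_right hkey hw
      simp only [hgdef, hφdef]
      nlinarith [this]
    -- integrate
    have hgint : IntervalIntegrable g volume A B := hgc.intervalIntegrable A B
    have hf2int : IntervalIntegrable (fun t => f t ^ 2 * w t) volume A B :=
      ((hfc.pow 2).mul hwc).intervalIntegrable A B
    have hf'2int : IntervalIntegrable (fun t => f' t ^ 2 * w t) volume A B := by
      rw [intervalIntegrable_iff]
      exact h3.integrableOn.mono_set (fun x _ => trivial)
    have hmono : b * ∫ t in A..B, g t ≤
        (∫ t in A..B, f t ^ 2 * w t) + (1 / b) * (∫ t in A..B, f' t ^ 2 * w t) - (F B - F A) := by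
      rw [← hFTC]
      have := intervalIntegral.integral_mono_on hAB (hgint.const_mul b)
        ((hf2int.add (hf'2int.const_mul (1/b))).sub hφint)
        (fun t _ => by simpa using habs t)
      rw [intervalIntegral.integral_const_mul] at this
      rw [intervalIntegral.integral_sub (hf2int.add (hf'2int.const_mul (1/b))) hφint,
        intervalIntegral.integral_add hf2int (hf'2int.const_mul (1/b)),
        intervalIntegral.integral_const_mul] at this
      linarith
    -- compare with global integrals
    have hglob2 : ∫ t in A..B, f t ^ 2 * w t ≤ ∫ t, f t ^ 2 * w t := by
      rw [intervalIntegral.integral_of_le hAB]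
      apply setIntegral_le_integral h2
      filter_upwards with t; positivity
    have hglob3 : ∫ t in A..B, f' t ^ 2 * w t ≤ ∫ t, f' t ^ 2 * w t := by
      rw [intervalIntegral.integral_of_le hAB]
      apply setIntegral_le_integral h3
      filter_upwards with t; positivity
    have hfinal : ∫ t in A..B, g t ≤
        (1 / b) * (∫ t, f t ^ 2 * w t) + (1 / b ^ 2) * (∫ t, f' t ^ 2 * w t) := by
      have h1b : 0 < 1 / b := by positivity
      have h3nn : 0 ≤ ∫ t in A..B, f' t ^ 2 * w t := by
        rw [intervalIntegral.integral_of_le hAB]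
        apply setIntegral_nonneg measurableSet_Ioc
        intro t _; positivity
      have := hmono
      have hIcc : b * ∫ t in A..B, g t ≤ (∫ t, f t ^ 2 * w t) + (1/b) * (∫ t, f' t ^ 2 * w t) := by
        have := mul_le_mul_of_nonneg_left hglob3 h1b.le
        linarith
      calc ∫ t in A..B, g t = (1/b) * (b * ∫ t in A..B, g t) := by field_simp
        _ ≤ (1/b) * ((∫ t, f t ^ 2 * w t) + (1/b) * (∫ t, f' t ^ 2 * w t)) :=
            mul_le_mul_of_nonneg_left hIcc h1b.le
        _ = (1 / b) * (∫ t, f t ^ 2 * w t) + (1 / b ^ 2) * (∫ t, f' t ^ 2 * w t) := by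
            field_simp
    -- convert to lintegral
    have hgIcc : IntegrableOn g (Icc A B) := hgc.integrableOn_Icc
    have : ∫⁻ t in Icc A B, ENNReal.ofReal (g t) = ENNReal.ofReal (∫ t in Icc A B, g t) := by
      rw [← ofReal_integral_eq_lintegral_ofReal hgIcc]
      filter_upwards with t using hgnn t
    rw [this]
    apply ENNReal.ofReal_le_ofReal
    rw [MeasureTheory.integral_Icc_eq_integral_Ioc, ← intervalIntegral.integral_of_le hAB]
    exact hfinal
  -- pass to the limit
  have hsup : ∫⁻ t : ℝ, ENNReal.ofReal (g t) =
      ⨆ n : ℕ, ∫⁻ t in Icc (c - n) (c + n), ENNReal.ofReal (g t) := by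
    have heq : ∀ n : ℕ, ∫⁻ t in Icc (c - n) (c + n), ENNReal.ofReal (g t) =
        ∫⁻ t, (Icc (c - (n:ℝ)) (c + n)).indicator (fun t => ENNReal.ofReal (g t)) t := by
      intro n
      rw [lintegral_indicator measurableSet_Icc]
    simp_rw [heq]
    rw [← lintegral_iSup]
    · congr 1
      funext t
      have : ∃ n : ℕ, t ∈ Icc (c - n) (c + n) := by
        obtain ⟨n, hn⟩ := exists_nat_ge (|t - c|)
        exact ⟨n, by constructor <;> [linarith [neg_abs_le (t - c)]; linarith [le_abs_self (t - c)]]⟩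
      obtain ⟨n, hn⟩ := this
      apply le_antisymm
      · apply le_iSup_of_le n
        rw [Set.indicator_of_mem hn]
      · exact iSup_le fun n => Set.indicator_le_self _ _ t
    · intro n
      exact (hgc.measurable.ennreal_ofReal).indicator measurableSet_Icc
    · intro i j hij
      have hij' : (i : ℝ) ≤ (j : ℝ) := Nat.cast_le.mpr hij
      apply Set.indicator_le_indicator_of_subset
      · apply Set.Icc_subset_Icc <;> linarith
      · intro t; exact zero_le
  rw [hsup]
  exact iSup_le key

lemma norm_sq_eq_sum3 (x : V3) : ‖x‖ ^ 2 = ∑ j, x j ^ 2 := by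
  rw [EuclideanSpace.norm_eq, Real.sq_sqrt (by positivity)]
  simp [sq_abs]

lemma ae_line_integrable (i : Fin 3) (G : V3 → ℝ) (hG : Integrable G) :
    ∀ᵐ y : Fin 2 → ℝ, Integrable (fun t : ℝ =>
      G (((MeasurableEquiv.toLp 2 (Fin 3 → ℝ)).symm).symm (i.insertNth t y))) := by
  set E := (MeasurableEquiv.toLp 2 (Fin 3 → ℝ)).symm with hEdef
  set Φ := MeasurableEquiv.piFinSuccAbove (fun _ : Fin 3 => ℝ) i with hΦdef
  have hA : MeasurePreserving (⇑E.symm) volume volume :=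
    (EuclideanSpace.volume_preserving_symm_measurableEquiv_toLp (Fin 3)).symm
  have hB : MeasurePreserving (⇑Φ.symm) volume volume :=
    (MeasureTheory.volume_preserving_piFinSuccAbove (fun _ : Fin 3 => ℝ) i).symm
  have hEP : MeasurePreserving (⇑(Φ.symm.trans E.symm)) volume volume := hA.comp hB
  have h1 : Integrable (fun p : ℝ × (Fin 2 → ℝ) => G (E.symm (Φ.symm p))) volume :=
    ((hEP.integrable_comp_emb (MeasurableEquiv.measurableEmbedding _)).mpr hG)
  rw [show (volume : Measure (ℝ × (Fin 2 → ℝ))) = (volume : Measure ℝ).prod volume from rfl] at h1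
  have h2 := h1.swap
  have h3 := h2.prod_right_ae
  exact h3

lemma coordBound (b : ℝ) (hb : 0 < b) (u₀ : V3) (u : V3 → ℝ) (hu : Differentiable ℝ u)
    (h2 : Integrable (fun v : V3 => u v ^ 2 * Real.exp (-b * ‖v - u₀‖ ^ 2)))
    (h3 : Integrable (fun v : V3 => ‖gradient u v‖ ^ 2 * Real.exp (-b * ‖v - u₀‖ ^ 2)))
    (i : Fin 3) :
    ∫⁻ v : V3, ENNReal.ofReal (u v ^ 2 * (v i - u₀ i) ^ 2 * Real.exp (-b * ‖v - u₀‖ ^ 2)) ≤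
      ENNReal.ofReal (1 / b) *
        (∫⁻ v : V3, ENNReal.ofReal (u v ^ 2 * Real.exp (-b * ‖v - u₀‖ ^ 2))) +
      ENNReal.ofReal (1 / b ^ 2) *
        (∫⁻ v : V3, ENNReal.ofReal (‖gradient u v‖ ^ 2 * Real.exp (-b * ‖v - u₀‖ ^ 2))) := by
  classical
  set E := (MeasurableEquiv.toLp 2 (Fin 3 → ℝ)).symm with hEdef
  set M : V3 → ℝ := fun v => Real.exp (-b * ‖v - u₀‖ ^ 2) with hMdef
  have huc : Continuous u := hu.continuous
  have hMc : Continuous M := by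
    apply Real.continuous_exp.comp
    exact continuous_const.mul ((continuous_id.sub continuous_const).norm.pow 2)
  have hgradnorm : ∀ v : V3, ‖gradient u v‖ = ‖fderiv ℝ u v‖ := fun v =>
    LinearIsometryEquiv.norm_map (InnerProductSpace.toDual ℝ V3).symm (fderiv ℝ u v)
  have hgradm : Measurable (fun v : V3 => ‖gradient u v‖) := by
    simp_rw [hgradnorm]
    exact (measurable_fderiv ℝ u).norm
  set c : ℝ := u₀ i with hcdef
  set w : ℝ → ℝ := fun t => Real.exp (-b * (t - c) ^ 2) with hwdef
  -- the line map
  set ℓ : (Fin 2 → ℝ) → ℝ → V3 := fun y t => E.symm (i.insertNth t y) with hℓdef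
  set e : V3 := EuclideanSpace.single i (1 : ℝ) with hedef
  have hℓcoord : ∀ y t j, (ℓ y t) j = Fin.insertNth (α := fun _ => ℝ) i t y j := by
    intro y t j
    simp [hℓdef, hEdef]
  have hℓaffine : ∀ y t, ℓ y t = ℓ y 0 + t • e := by
    intro y t
    ext j
    rw [hℓcoord]
    have : (ℓ y 0 + t • e) j = (ℓ y 0) j + t * (if j = i then 1 else 0) := by
      simp [hedef, EuclideanSpace.single_apply]
    rw [this, hℓcoord]
    rcases eq_or_ne j i with rfl | hj
    · simp [Fin.insertNth_apply_same]
    · obtain ⟨k, rfl⟩ := Fin.exists_succAbove_eq hj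
      simp [Fin.insertNth_apply_succAbove, Fin.succAbove_ne]
  have hℓi : ∀ y t, (ℓ y t) i = t := by
    intro y t; rw [hℓcoord]; exact Fin.insertNth_apply_same (α := fun _ => ℝ) i t y
  set K : (Fin 2 → ℝ) → ℝ := fun y => Real.exp (-b * ∑ j, (y j - u₀ (i.succAbove j)) ^ 2)
    with hKdef
  have hKpos : ∀ y, 0 < K y := fun y => Real.exp_pos _
  have hMline : ∀ y t, M (ℓ y t) = w t * K y := by
    intro y t
    have hcoordsub : ∀ j, (ℓ y t - u₀) j = Fin.insertNth (α := fun _ => ℝ) i t y j - u₀ j := by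
      intro j
      have : (ℓ y t - u₀) j = (ℓ y t) j - u₀ j := rfl
      rw [this, hℓcoord]
    have hnorm : ‖ℓ y t - u₀‖ ^ 2 = (t - c) ^ 2 + ∑ j, (y j - u₀ (i.succAbove j)) ^ 2 := by
      rw [norm_sq_eq_sum3]
      have := Fin.sum_univ_succAbove (fun j => ((ℓ y t - u₀) j) ^ 2) i
      rw [this]
      congr 1
      · rw [hcoordsub i, Fin.insertNth_apply_same]
      · exact Finset.sum_congr rfl fun k _ => by
          rw [hcoordsub _, Fin.insertNth_apply_succAbove]
    show Real.exp (-b * ‖ℓ y t - u₀‖ ^ 2) = _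
    rw [hnorm, show -b * ((t - c) ^ 2 + ∑ j, (y j - u₀ (i.succAbove j)) ^ 2) =
      -b * (t - c) ^ 2 + -b * ∑ j, (y j - u₀ (i.succAbove j)) ^ 2 by ring, Real.exp_add]
  -- per-line inequality, for a.e. y
  have hae2 := ae_line_integrable i (fun v => u v ^ 2 * M v) h2
  have hae3 := ae_line_integrable i (fun v => ‖gradient u v‖ ^ 2 * M v) h3
  have hline : ∀ᵐ y : Fin 2 → ℝ,
      ∫⁻ t : ℝ, ENNReal.ofReal (u (ℓ y t) ^ 2 * ((ℓ y t) i - c) ^ 2 * M (ℓ y t)) ≤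
        ENNReal.ofReal (1 / b) * (∫⁻ t : ℝ, ENNReal.ofReal (u (ℓ y t) ^ 2 * M (ℓ y t))) +
        ENNReal.ofReal (1 / b ^ 2) *
          (∫⁻ t : ℝ, ENNReal.ofReal (‖gradient u (ℓ y t)‖ ^ 2 * M (ℓ y t))) := by
    filter_upwards [hae2, hae3] with y hy2 hy3
    set f : ℝ → ℝ := fun t => u (ℓ y t) with hfdef
    set f' : ℝ → ℝ := fun t => fderiv ℝ u (ℓ y t) e with hf'def
    have hℓm : Measurable (fun t => ℓ y t) := by
      have heq : (fun t => ℓ y t) = fun t => ℓ y 0 + t • e := funext (hℓaffine y)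
      rw [heq]
      have : Continuous (fun t : ℝ => ℓ y 0 + t • e) := by fun_prop
      exact this.measurable
    have hfd : ∀ t, HasDerivAt f (f' t) t := by
      intro t
      have hL : HasDerivAt (fun s => ℓ y s) e t := by
        have heq : (fun s => ℓ y s) = fun s => ℓ y 0 + s • e := funext (hℓaffine y)
        rw [heq]
        simpa using ((hasDerivAt_id t).smul_const e).const_add (ℓ y 0)
      exact (hu (ℓ y t)).hasFDerivAt.comp_hasDerivAt t hL
    have hfm : Measurable f' := (measurable_fderiv_apply_const ℝ u e).comp hℓm
    have hf'le : ∀ t, |f' t| ≤ ‖gradient u (ℓ y t)‖ := by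
      intro t
      rw [hgradnorm]
      have := (fderiv ℝ u (ℓ y t)).le_opNorm e
      simpa [hedef, EuclideanSpace.norm_single] using this
    -- integrability along the line
    have hKne : K y ≠ 0 := (hKpos y).ne'
    have h2y : Integrable (fun t => f t ^ 2 * w t) := by
      apply (hy2.const_mul ((K y)⁻¹)).congr
      filter_upwards with t
      rw [hMline y t]
      field_simp
      ring
    have h3grad : Integrable (fun t => ‖gradient u (ℓ y t)‖ ^ 2 * w t) := by
      apply (hy3.const_mul ((K y)⁻¹)).congr
      filter_upwards with t
      rw [hMline y t]
      field_simp
      ring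
    have h3y : Integrable (fun t => f' t ^ 2 * w t) := by
      apply Integrable.mono' h3grad
      · exact ((hfm.pow_const 2).mul (by fun_prop : Measurable w)).aestronglyMeasurable
      · filter_upwards with t
        have h1 : f' t ^ 2 ≤ ‖gradient u (ℓ y t)‖ ^ 2 := by
          have := hf'le t
          nlinarith [abs_nonneg (f' t), sq_abs (f' t), norm_nonneg (gradient u (ℓ y t))]
        have hwp : 0 ≤ w t := (Real.exp_pos _).le
        have : f' t ^ 2 * w t ≤ ‖gradient u (ℓ y t)‖ ^ 2 * w t :=
          mul_le_mul_of_nonneg_right h1 hwp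
        calc ‖f' t ^ 2 * w t‖ = f' t ^ 2 * w t := by
              rw [Real.norm_eq_abs, abs_of_nonneg (by positivity)]
          _ ≤ _ := this
    have key := oneD b c hb f f' hfd hfm h2y h3y
    -- multiply by K y
    calc ∫⁻ t : ℝ, ENNReal.ofReal (u (ℓ y t) ^ 2 * ((ℓ y t) i - c) ^ 2 * M (ℓ y t)) =
        ∫⁻ t : ℝ, ENNReal.ofReal (K y) * ENNReal.ofReal (f t ^ 2 * (t - c) ^ 2 * w t) := by
          congr 1; funext t
          rw [← ENNReal.ofReal_mul (hKpos y).le, hℓi y t, hMline y t]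
          congr 1; ring
      _ = ENNReal.ofReal (K y) * ∫⁻ t : ℝ, ENNReal.ofReal (f t ^ 2 * (t - c) ^ 2 * w t) :=
          lintegral_const_mul' _ _ ENNReal.ofReal_ne_top
      _ ≤ ENNReal.ofReal (K y) * ENNReal.ofReal ((1 / b) * (∫ t, f t ^ 2 * w t) +
            (1 / b ^ 2) * (∫ t, f' t ^ 2 * w t)) := mul_le_mul_right key _
      _ = ENNReal.ofReal ((1 / b) * ∫ t, u (ℓ y t) ^ 2 * M (ℓ y t)) +
          ENNReal.ofReal ((1 / b ^ 2) * (K y * ∫ t, f' t ^ 2 * w t)) := by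
          rw [← ENNReal.ofReal_mul (hKpos y).le]
          have hI2 : K y * ∫ t, f t ^ 2 * w t = ∫ t, u (ℓ y t) ^ 2 * M (ℓ y t) := by
            rw [← integral_const_mul]
            congr 1; funext t; rw [hMline y t]; ring
          have hI2nn : 0 ≤ ∫ t, u (ℓ y t) ^ 2 * M (ℓ y t) :=
            integral_nonneg fun t => by positivity
          have hI3nn : 0 ≤ ∫ t, f' t ^ 2 * w t :=
            integral_nonneg fun t => mul_nonneg (sq_nonneg _) (Real.exp_pos _).le
          rw [show K y * ((1 / b) * (∫ t, f t ^ 2 * w t) + (1 / b ^ 2) * ∫ t, f' t ^ 2 * w t) =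
            (1 / b) * (K y * ∫ t, f t ^ 2 * w t) + (1 / b ^ 2) * (K y * ∫ t, f' t ^ 2 * w t)
            by ring, hI2]
          rw [ENNReal.ofReal_add (by positivity) (by positivity)]
      _ ≤ ENNReal.ofReal (1 / b) * (∫⁻ t : ℝ, ENNReal.ofReal (u (ℓ y t) ^ 2 * M (ℓ y t))) +
          ENNReal.ofReal (1 / b ^ 2) *
            (∫⁻ t : ℝ, ENNReal.ofReal (‖gradient u (ℓ y t)‖ ^ 2 * M (ℓ y t))) := by
          refine add_le_add ?_ ?_
          · rw [ENNReal.ofReal_mul (by positivity)]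
            apply mul_le_mul_right
            rw [ofReal_integral_eq_lintegral_ofReal hy2
              (by filter_upwards with t; positivity)]
          · rw [ENNReal.ofReal_mul (by positivity)]
            apply mul_le_mul_right
            have hKI : K y * ∫ t, f' t ^ 2 * w t = ∫ t, f' t ^ 2 * w t * K y := by
              rw [← integral_const_mul]; congr 1; funext t; ring
            rw [hKI, ofReal_integral_eq_lintegral_ofReal
              (by simpa [mul_assoc] using (h3y.mul_const (K y)))
              (by filter_upwards with t; positivity)]
            apply lintegral_mono
            intro t
            apply ENNReal.ofReal_le_ofReal
            rw [hMline y t]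
            have h1 : f' t ^ 2 ≤ ‖gradient u (ℓ y t)‖ ^ 2 := by
              have := hf'le t
              nlinarith [abs_nonneg (f' t), sq_abs (f' t), norm_nonneg (gradient u (ℓ y t))]
            have hwp : 0 ≤ w t * K y := by positivity
            calc f' t ^ 2 * w t * K y = f' t ^ 2 * (w t * K y) := by ring
              _ ≤ ‖gradient u (ℓ y t)‖ ^ 2 * (w t * K y) :=
                  mul_le_mul_of_nonneg_right h1 hwp
  -- now integrate over y and transfer
  set Φ := MeasurableEquiv.piFinSuccAbove (fun _ : Fin 3 => ℝ) i with hΦdef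
  have hvim : Measurable (fun v : V3 => v i) :=
    (measurable_pi_apply i).comp E.measurable
  have hm1 : Measurable (fun v : V3 => ENNReal.ofReal (u v ^ 2 * (v i - c) ^ 2 * M v)) := by
    apply Measurable.ennreal_ofReal
    exact (((huc.measurable.pow_const 2).mul ((hvim.sub measurable_const).pow_const 2)).mul
      hMc.measurable)
  have hm2 : Measurable (fun v : V3 => ENNReal.ofReal (u v ^ 2 * M v)) := by
    apply Measurable.ennreal_ofReal
    exact (huc.measurable.pow_const 2).mul hMc.measurable
  have hm3 : Measurable (fun v : V3 => ENNReal.ofReal (‖gradient u v‖ ^ 2 * M v)) := by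
    apply Measurable.ennreal_ofReal
    exact (hgradm.pow_const 2).mul hMc.measurable
  rw [transfer3 i _ hm1, transfer3 i _ hm2, transfer3 i _ hm3]
  set A : (Fin 2 → ℝ) → ℝ≥0∞ := fun y => ∫⁻ t : ℝ,
    ENNReal.ofReal (u (ℓ y t) ^ 2 * M (ℓ y t)) with hAdef
  set B : (Fin 2 → ℝ) → ℝ≥0∞ := fun y => ∫⁻ t : ℝ,
    ENNReal.ofReal (‖gradient u (ℓ y t)‖ ^ 2 * M (ℓ y t)) with hBdef
  have hAmeas : Measurable A := by
    apply Measurable.lintegral_prod_left'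
      (f := fun p : ℝ × (Fin 2 → ℝ) => ENNReal.ofReal (u (ℓ p.2 p.1) ^ 2 * M (ℓ p.2 p.1)))
    exact hm2.comp (E.symm.measurable.comp Φ.symm.measurable)
  have hBmeas : Measurable B := by
    apply Measurable.lintegral_prod_left'
      (f := fun p : ℝ × (Fin 2 → ℝ) => ENNReal.ofReal (‖gradient u (ℓ p.2 p.1)‖ ^ 2 * M (ℓ p.2 p.1)))
    exact hm3.comp (E.symm.measurable.comp Φ.symm.measurable)
  calc ∫⁻ y : Fin 2 → ℝ, ∫⁻ t : ℝ,
        ENNReal.ofReal (u (ℓ y t) ^ 2 * ((ℓ y t) i - c) ^ 2 * M (ℓ y t)) ≤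
      ∫⁻ y : Fin 2 → ℝ, (ENNReal.ofReal (1 / b) * A y + ENNReal.ofReal (1 / b ^ 2) * B y) :=
        lintegral_mono_ae (by filter_upwards [hline] with y hy; exact hy)
    _ = ENNReal.ofReal (1 / b) * (∫⁻ y, A y) + ENNReal.ofReal (1 / b ^ 2) * (∫⁻ y, B y) := by
        rw [lintegral_add_left (hAmeas.const_mul _)]
        rw [lintegral_const_mul' _ _ ENNReal.ofReal_ne_top,
          lintegral_const_mul' _ _ ENNReal.ofReal_ne_top]

set_option maxHeartbeats 1000000

/-- for the Gaussian weight `M(v) = e^{−b|v−u₀|²}` and `δ > 0` with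
`∫ e^{δ|v|²} M dv < ∞`, every `u ∈ H¹(M)` satisfies
`∫ u² ⟨v⟩² M dv ≤ C (∫ |∇u|² M dv + ∫ u² M dv)` with `C = C(b, δ, u₀)`. -/
theorem stmt11 (b δ : ℝ) (u₀ : V3) (hb : 0 < b) (hδ : 0 < δ)
    (hδint : Integrable (fun v : V3 => Real.exp (δ * ‖v‖ ^ 2) * Real.exp (-b * ‖v - u₀‖ ^ 2))) :
    ∃ C : ℝ, 0 < C ∧
      ∀ u : V3 → ℝ, Differentiable ℝ u →
        Integrable (fun v => u v ^ 2 * Real.exp (-b * ‖v - u₀‖ ^ 2)) →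
        Integrable (fun v => ‖gradient u v‖ ^ 2 * Real.exp (-b * ‖v - u₀‖ ^ 2)) →
        (∫⁻ v : V3, ENNReal.ofReal (u v ^ 2 * (1 + ‖v‖ ^ 2) * Real.exp (-b * ‖v - u₀‖ ^ 2))) ≤
          ENNReal.ofReal (C *
            ((∫ v, ‖gradient u v‖ ^ 2 * Real.exp (-b * ‖v - u₀‖ ^ 2)) +
             (∫ v, u v ^ 2 * Real.exp (-b * ‖v - u₀‖ ^ 2)))) := by
  classical
  set k : ℝ := ‖u₀‖ ^ 2 with hkdef
  have hknn : 0 ≤ k := sq_nonneg _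
  refine ⟨1 + 2 * k + 6 / b + 6 / b ^ 2, by positivity, ?_⟩
  intro u hu h2 h3
  set C : ℝ := 1 + 2 * k + 6 / b + 6 / b ^ 2 with hCdef
  set M : V3 → ℝ := fun v => Real.exp (-b * ‖v - u₀‖ ^ 2) with hMdef
  have hMc : Continuous M := by
    apply Real.continuous_exp.comp
    exact continuous_const.mul ((continuous_id.sub continuous_const).norm.pow 2)
  have huc : Continuous u := hu.continuous
  have hgradnorm : ∀ v : V3, ‖gradient u v‖ = ‖fderiv ℝ u v‖ := fun v =>
    LinearIsometryEquiv.norm_map (InnerProductSpace.toDual ℝ V3).symm (fderiv ℝ u v)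
  have hgradm : Measurable (fun v : V3 => ‖gradient u v‖) := by
    simp_rw [hgradnorm]
    exact (measurable_fderiv ℝ u).norm
  set m : ℝ := ∫ v, u v ^ 2 * M v with hmdef
  set G : ℝ := ∫ v, ‖gradient u v‖ ^ 2 * M v with hGdef
  have hmnn : 0 ≤ m := integral_nonneg fun v => by positivity
  have hGnn : 0 ≤ G := integral_nonneg fun v => by positivity
  have hbinv : (0:ℝ) ≤ 1 / b := by positivity
  have hb2inv : (0:ℝ) ≤ 1 / b ^ 2 := by positivity
  have htnn : (0:ℝ) ≤ (1 / b) * m + (1 / b ^ 2) * G :=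
    add_nonneg (mul_nonneg hbinv hmnn) (mul_nonneg hb2inv hGnn)
  have hkmnn : (0:ℝ) ≤ (1 + 2 * k) * m := mul_nonneg (by positivity) hmnn
  have hLm : ∫⁻ v : V3, ENNReal.ofReal (u v ^ 2 * M v) = ENNReal.ofReal m := by
    rw [hmdef, ofReal_integral_eq_lintegral_ofReal h2 (by filter_upwards with v; positivity)]
  have hLG : ∫⁻ v : V3, ENNReal.ofReal (‖gradient u v‖ ^ 2 * M v) = ENNReal.ofReal G := by
    rw [hGdef, ofReal_integral_eq_lintegral_ofReal h3 (by filter_upwards with v; positivity)]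
  have hE := (MeasurableEquiv.toLp 2 (Fin 3 → ℝ)).symm
  have hvim : ∀ i : Fin 3, Measurable (fun v : V3 => v i) := fun i =>
    (measurable_pi_apply i).comp ((MeasurableEquiv.toLp 2 (Fin 3 → ℝ)).symm).measurable
  -- pointwise bound
  have hpt : ∀ v : V3, u v ^ 2 * (1 + ‖v‖ ^ 2) * M v ≤
      (1 + 2 * k) * (u v ^ 2 * M v) + (2 * (u v ^ 2 * (v 0 - u₀ 0) ^ 2 * M v) +
        2 * (u v ^ 2 * (v 1 - u₀ 1) ^ 2 * M v) + 2 * (u v ^ 2 * (v 2 - u₀ 2) ^ 2 * M v)) := by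
    intro v
    have hMnn : 0 ≤ M v := (Real.exp_pos _).le
    have hsub : ‖v - u₀‖ ^ 2 = (v 0 - u₀ 0) ^ 2 + (v 1 - u₀ 1) ^ 2 + (v 2 - u₀ 2) ^ 2 := by
      rw [norm_sq_eq_sum3, Fin.sum_univ_three]
      rfl
    have h1 : ‖v‖ ≤ ‖v - u₀‖ + ‖u₀‖ := by
      simpa using norm_add_le (v - u₀) u₀
    have h2' : 1 + ‖v‖ ^ 2 ≤ (1 + 2 * k) +
        2 * ((v 0 - u₀ 0) ^ 2 + (v 1 - u₀ 1) ^ 2 + (v 2 - u₀ 2) ^ 2) := by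
      rw [← hsub, hkdef]
      have h1sq : ‖v‖ ^ 2 ≤ (‖v - u₀‖ + ‖u₀‖) ^ 2 := pow_le_pow_left₀ (norm_nonneg v) h1 2
      nlinarith [sq_nonneg (‖v - u₀‖ - ‖u₀‖), h1sq]
    have h3' : u v ^ 2 * (1 + ‖v‖ ^ 2) * M v ≤
        u v ^ 2 * ((1 + 2 * k) + 2 * ((v 0 - u₀ 0) ^ 2 + (v 1 - u₀ 1) ^ 2 +
          (v 2 - u₀ 2) ^ 2)) * M v := by
      apply mul_le_mul_of_nonneg_right _ hMnn
      exact mul_le_mul_of_nonneg_left h2' (sq_nonneg (u v))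
    calc u v ^ 2 * (1 + ‖v‖ ^ 2) * M v ≤ _ := h3'
      _ = (1 + 2 * k) * (u v ^ 2 * M v) + (2 * (u v ^ 2 * (v 0 - u₀ 0) ^ 2 * M v) +
        2 * (u v ^ 2 * (v 1 - u₀ 1) ^ 2 * M v) + 2 * (u v ^ 2 * (v 2 - u₀ 2) ^ 2 * M v)) := by
          ring
  -- measurable pieces
  have hmconst : Measurable (fun v : V3 => ENNReal.ofReal ((1 + 2 * k) * (u v ^ 2 * M v))) :=
    (measurable_const.mul ((huc.measurable.pow_const 2).mul hMc.measurable)).ennreal_ofReal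
  have hmcoord : ∀ i : Fin 3, Measurable
      (fun v : V3 => ENNReal.ofReal (2 * (u v ^ 2 * (v i - u₀ i) ^ 2 * M v))) := fun i =>
    (measurable_const.mul (((huc.measurable.pow_const 2).mul
      (((hvim i).sub measurable_const).pow_const 2)).mul hMc.measurable)).ennreal_ofReal
  -- main estimate
  have hmain : ∫⁻ v : V3, ENNReal.ofReal (u v ^ 2 * (1 + ‖v‖ ^ 2) * M v) ≤
      ENNReal.ofReal ((1 + 2 * k) * m + (2 * ((1 / b) * m + (1 / b ^ 2) * G) +
        2 * ((1 / b) * m + (1 / b ^ 2) * G) + 2 * ((1 / b) * m + (1 / b ^ 2) * G))) := by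
    have hsplit : ∫⁻ v : V3, ENNReal.ofReal (u v ^ 2 * (1 + ‖v‖ ^ 2) * M v) ≤
        (∫⁻ v : V3, ENNReal.ofReal ((1 + 2 * k) * (u v ^ 2 * M v))) +
        ((∫⁻ v : V3, ENNReal.ofReal (2 * (u v ^ 2 * (v 0 - u₀ 0) ^ 2 * M v))) +
         (∫⁻ v : V3, ENNReal.ofReal (2 * (u v ^ 2 * (v 1 - u₀ 1) ^ 2 * M v))) +
         (∫⁻ v : V3, ENNReal.ofReal (2 * (u v ^ 2 * (v 2 - u₀ 2) ^ 2 * M v)))) := by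
      have hptE : ∀ v : V3, ENNReal.ofReal (u v ^ 2 * (1 + ‖v‖ ^ 2) * M v) ≤
          ENNReal.ofReal ((1 + 2 * k) * (u v ^ 2 * M v)) +
          (ENNReal.ofReal (2 * (u v ^ 2 * (v 0 - u₀ 0) ^ 2 * M v)) +
           ENNReal.ofReal (2 * (u v ^ 2 * (v 1 - u₀ 1) ^ 2 * M v)) +
           ENNReal.ofReal (2 * (u v ^ 2 * (v 2 - u₀ 2) ^ 2 * M v))) := by
        intro v
        refine le_trans (ENNReal.ofReal_le_ofReal (hpt v)) ?_
        rw [ENNReal.ofReal_add (by positivity) (by positivity),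
          ENNReal.ofReal_add (by positivity) (by positivity),
          ENNReal.ofReal_add (by positivity) (by positivity)]
      calc ∫⁻ v : V3, ENNReal.ofReal (u v ^ 2 * (1 + ‖v‖ ^ 2) * M v) ≤
          ∫⁻ v : V3, (ENNReal.ofReal ((1 + 2 * k) * (u v ^ 2 * M v)) +
            (ENNReal.ofReal (2 * (u v ^ 2 * (v 0 - u₀ 0) ^ 2 * M v)) +
             ENNReal.ofReal (2 * (u v ^ 2 * (v 1 - u₀ 1) ^ 2 * M v)) +
             ENNReal.ofReal (2 * (u v ^ 2 * (v 2 - u₀ 2) ^ 2 * M v)))) :=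
            lintegral_mono hptE
        _ = _ := by
            rw [lintegral_add_left hmconst]
            congr 1
            rw [lintegral_add_left (by exact (hmcoord 0).add (hmcoord 1) : Measurable fun v : V3 => ENNReal.ofReal (2 * (u v ^ 2 * (v 0 - u₀ 0) ^ 2 * M v)) + ENNReal.ofReal (2 * (u v ^ 2 * (v 1 - u₀ 1) ^ 2 * M v)))]
            congr 1
            rw [lintegral_add_left (hmcoord 0)]
    refine hsplit.trans ?_
    -- evaluate each piece
    have hc1 : (∫⁻ v : V3, ENNReal.ofReal ((1 + 2 * k) * (u v ^ 2 * M v))) =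
        ENNReal.ofReal ((1 + 2 * k) * m) := by
      have : ∀ v : V3, ENNReal.ofReal ((1 + 2 * k) * (u v ^ 2 * M v)) =
          ENNReal.ofReal (1 + 2 * k) * ENNReal.ofReal (u v ^ 2 * M v) := fun v =>
        ENNReal.ofReal_mul (by positivity)
      simp_rw [this]
      rw [lintegral_const_mul' _ _ ENNReal.ofReal_ne_top, hLm,
        ENNReal.ofReal_mul (show (0:ℝ) ≤ 1 + 2 * k by positivity)]
    have hcoord : ∀ i : Fin 3,
        (∫⁻ v : V3, ENNReal.ofReal (2 * (u v ^ 2 * (v i - u₀ i) ^ 2 * M v))) ≤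
          ENNReal.ofReal (2 * ((1 / b) * m + (1 / b ^ 2) * G)) := by
      intro i
      have hrw : ∀ v : V3, ENNReal.ofReal (2 * (u v ^ 2 * (v i - u₀ i) ^ 2 * M v)) =
          ENNReal.ofReal 2 * ENNReal.ofReal (u v ^ 2 * (v i - u₀ i) ^ 2 * M v) := fun v =>
        ENNReal.ofReal_mul (by norm_num)
      simp_rw [hrw]
      rw [lintegral_const_mul' _ _ ENNReal.ofReal_ne_top]
      have hcb := coordBound b hb u₀ u hu h2 h3 i
      rw [hLm, hLG] at hcb
      calc ENNReal.ofReal 2 * ∫⁻ v : V3,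
            ENNReal.ofReal (u v ^ 2 * (v i - u₀ i) ^ 2 * M v) ≤
          ENNReal.ofReal 2 * (ENNReal.ofReal (1 / b) * ENNReal.ofReal m +
            ENNReal.ofReal (1 / b ^ 2) * ENNReal.ofReal G) := mul_le_mul_right hcb _
        _ = ENNReal.ofReal (2 * ((1 / b) * m + (1 / b ^ 2) * G)) := by
            rw [ENNReal.ofReal_mul (show (0:ℝ) ≤ 2 by norm_num),
              ENNReal.ofReal_add (mul_nonneg hbinv hmnn) (mul_nonneg hb2inv hGnn),
              ENNReal.ofReal_mul hbinv, ENNReal.ofReal_mul hb2inv]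
    rw [hc1]
    rw [ENNReal.ofReal_add hkmnn (by linarith)]
    refine add_le_add le_rfl ?_
    rw [ENNReal.ofReal_add (by linarith) (by linarith),
      ENNReal.ofReal_add (by linarith) (by linarith)]
    exact add_le_add (add_le_add (hcoord 0) (hcoord 1)) (hcoord 2)
  refine hmain.trans ?_
  apply ENNReal.ofReal_le_ofReal
  rw [hCdef]
  have h6b : 6 / b = 6 * (1 / b) := by ring
  have h6b2 : 6 / b ^ 2 = 6 * (1 / b ^ 2) := by ring
  nlinarith [mul_nonneg hbinv hGnn, mul_nonneg hb2inv hmnn, mul_nonneg hknn hGnn,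
    mul_nonneg hknn hmnn, mul_nonneg hbinv hmnn, mul_nonneg hb2inv hGnn]
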